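/- arXiv:2209.01129 — 2 statements merged into one kernel-verified Lean document; each statement's English description precedes it below -/
import Mathlib

section
/- Correctness of a single-memory lookup with read-over-write: define lookup over a list of (index, value) store operations applied to an initial memory μ₀, where lookup compares the queried index i to each stored index κ using a conservative syntactic comparison eq? : Term → Term → Option Bool that, when returning some b, is semantically correct (b = true implies equal values under all models, b = false implies distinct values under all models). If lookup returns a value v (skipping stores with eq? = some false and matching on eq? = some true), then for every model M, M(v) equals the semantic select of M(i) in the memory obtained by applying all the stores to μ₀ under M. -/
variable {Term BV : Type*} [DecidableEq BV]

/-- Semantic (concrete) store: pointwise update of a memory. -/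
def sstore (μ : BV → BV) (i v : BV) : BV → BV := fun j => if j = i then v else μ j

/-- Semantic select. -/
def sselect (μ : BV → BV) (i : BV) : BV := μ i

/-- Apply a list of symbolic stores (most recent first) to the initial
memory `μ₀`, under the model `M`. -/
def applyStores (M : Term → BV) (μ₀ : BV → BV) : List (Term × Term) → BV → BV
  | [] => μ₀
  | (κ, v) :: rest => sstore (applyStores M μ₀ rest) (M κ) (M v)

/-- Symbolic lookup of index `i` through a list of stores (most recent first),
using a conservative syntactic comparison `eq?`. Returns `some v` if it can
resolve the load to the stored value `v`; returns `none` if it aborts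
(i.e., it would return the unsimplified symbolic select). -/
def lookup (eq? : Term → Term → Option Bool) :
    List (Term × Term) → Term → Option Term
  | [], _ => none
  | (κ, v) :: rest, i =>
    match eq? i κ with
    | some true => some v
    | some false => lookup eq? rest i
    | none => none

theorem sselect_applyStores_cons (M : Term → BV) (μ₀ : BV → BV) (κ w : Term)
    (rest : List (Term × Term)) (x : BV) :
    sselect (applyStores M μ₀ ((κ, w) :: rest)) x =
      if x = M κ then M w else sselect (applyStores M μ₀ rest) x := by
  rfl

theorem lookup_cons_eq_some_iff (eq? : Term → Term → Option Bool) (κ w : Term)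
    (rest : List (Term × Term)) (i v : Term) :
    lookup eq? ((κ, w) :: rest) i = some v ↔
      eq? i κ = some true ∧ w = v ∨ eq? i κ = some false ∧ lookup eq? rest i = some v := by
  simp only [lookup]
  rcases eq? i κ with _ | _ | _ <;> simp

theorem lookup_correct (eq? : Term → Term → Option Bool)
    (heqT : ∀ i κ, eq? i κ = some true → ∀ M : Term → BV, M i = M κ)
    (heqF : ∀ i κ, eq? i κ = some false → ∀ M : Term → BV, M i ≠ M κ)
    (stores : List (Term × Term)) (i v : Term)
    (h : lookup eq? stores i = some v) :
    ∀ (M : Term → BV) (μ₀ : BV → BV),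
      M v = sselect (applyStores M μ₀ stores) (M i) := by
  intro M μ₀
  induction stores with
  | nil => simp [lookup] at h
  | cons store rest ih =>
    obtain ⟨κ, w⟩ := store
    rw [sselect_applyStores_cons]
    rcases (lookup_cons_eq_some_iff eq? κ w rest i v).mp h with ⟨hmatch, rfl⟩ | ⟨hskip, hrest⟩
    · rw [if_pos (heqT i κ hmatch M)]
    · rw [if_neg (heqF i κ hskip M)]
      exact ih hrest
end

section
/- Contrapositive formulation of bounded verification: in a setting where symbolic execution over-approximates neither leakage nor reachability, if there exist low-equivalent concrete initial configurations whose k-step leakage traces differ, then symbolic execution starting from a fully symbolic initial configuration gets stuck (some symbolic leakage predicate evaluates to false) within k steps. Equivalently, if symbolic execution completes k steps without any leakage predicate failing, the program is observationally noninterferent up to k. -/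
variable {Config SConfig Leak Model : Type*}

/-- `Run step c n c' t`: the concrete (deterministic) system performs `n`
steps from `c` to `c'`, emitting the leakage trace `t`. -/
inductive Run (step : Config → Option (Config × Leak)) :
    Config → ℕ → Config → List Leak → Prop where
  | zero {c} : Run step c 0 c []
  | succ {c c' c'' n ℓ t} :
      step c = some (c', ℓ) → Run step c' n c'' t →
      Run step c (n + 1) c'' (ℓ :: t)

/-- `SReach sstep s n s'`: the symbolic system can reach `s'` from `s`
in `n` steps. -/
inductive SReach (sstep : SConfig → SConfig → Prop) :
    SConfig → ℕ → SConfig → Prop where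
  | zero {s} : SReach sstep s 0 s
  | succ {s s' s'' n} :
      sstep s s' → SReach sstep s' n s'' → SReach sstep s (n + 1) s''

/-- Symbolic execution from `s₀` gets stuck (some symbolic leakage predicate
evaluates to false) within `k` steps. -/
def GetsStuck (sstep : SConfig → SConfig → Prop) (stuck : SConfig → Prop)
    (s₀ : SConfig) (k : ℕ) : Prop :=
  ∃ n ≤ k, ∃ s, SReach sstep s₀ n s ∧ stuck s

/-! Under completeness, two equal-trace runs of fewer than `k` steps from a fully symbolic pair end
in the two concretizations of a non-stuck symbolic state, and soundness of the leakage predicates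
makes their next leakages agree; induction on the run length gives equal `k`-step traces. -/

theorem Run.exists_snoc {step : Config → Option (Config × Leak)} :
    ∀ {n : ℕ} {c c'' : Config} {t : List Leak}, Run step c (n + 1) c'' t →
      ∃ c' ℓ t₀, Run step c n c' t₀ ∧ step c' = some (c'', ℓ) ∧ t = t₀ ++ [ℓ]
  | 0, _, _, _, .succ hstep .zero => ⟨_, _, [], .zero, hstep, rfl⟩
  | _ + 1, _, _, _, .succ hstep hrun =>
    let ⟨c', ℓ, t₀, hrun', hlast, ht⟩ := hrun.exists_snoc
    ⟨c', ℓ, _ :: t₀, .succ hstep hrun', hlast, by rw [ht, List.cons_append]⟩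

theorem Run.trace_eq_of_forall_lt {step : Config → Option (Config × Leak)}
    {R : Config → Config → Prop}
    (hleak : ∀ c c' d d' ℓ ℓ', R c c' → step c = some (d, ℓ) → step c' = some (d', ℓ') → ℓ = ℓ')
    {k : ℕ} {c₀ c₀' : Config}
    (hR : ∀ n < k, ∀ c c' t, Run step c₀ n c t → Run step c₀' n c' t → R c c') :
    ∀ {n}, n ≤ k → ∀ {c c' t t'}, Run step c₀ n c t → Run step c₀' n c' t' → t = t'
  | 0, _, _, _, _, _, .zero, .zero => rfl
  | n + 1, hn, _, _, _, _, h, h' => by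
    obtain ⟨c, ℓ, t, hrun, hlast, rfl⟩ := h.exists_snoc
    obtain ⟨c', ℓ', t', hrun', hlast', rfl⟩ := h'.exists_snoc
    obtain rfl : t = t' := trace_eq_of_forall_lt hleak hR (by omega) hrun hrun'
    rw [hleak c c' _ _ ℓ ℓ' (hR n hn c c' t hrun hrun') hlast hlast']

theorem bounded_verification_contrapositive
    (step : Config → Option (Config × Leak))
    (sstep : SConfig → SConfig → Prop) (stuck : SConfig → Prop)
    (lowEq : Config → Config → Prop)
    -- `conc true M c s` : the left side of `s` concretizes to `c` under `M`;
    -- `conc false M c s` : likewise for the right side.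
    (conc : Bool → Model → Config → SConfig → Prop)
    -- `pathSat M s` : the model `M` satisfies the path predicate of `s`.
    (pathSat : Model → SConfig → Prop)
    (s₀ : SConfig) (k : ℕ)
    -- (Completeness) If symbolic execution does not get stuck within `k`
    -- steps, any pair of same-path (equal-leakage-prefix) concrete `n`-step
    -- executions (`n ≤ k`) whose initial states concretize the two sides of
    -- `s₀` is matched by a symbolic `n`-step execution reaching a non-stuck
    -- state concretizing both final states under some model of its path
    -- predicate.
    (hComplete : ¬ GetsStuck sstep stuck s₀ k →
      ∀ n ≤ k, ∀ (M : Model) (c₀ c₀' cₙ cₙ' : Config) (t t' : List Leak),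
        pathSat M s₀ → conc true M c₀ s₀ → conc false M c₀' s₀ →
        Run step c₀ n cₙ t → Run step c₀' n cₙ' t' → t = t' →
        ∃ (sₙ : SConfig) (M' : Model), SReach sstep s₀ n sₙ ∧ ¬ stuck sₙ ∧
          pathSat M' sₙ ∧ conc true M' cₙ sₙ ∧ conc false M' cₙ' sₙ)
    -- (Soundness of leakage predicates) If a symbolic state is not stuck,
    -- then for any model of its path predicate, the concrete steps from its
    -- left and right concretizations emit equal leakages.
    (hSound : ∀ (s : SConfig), ¬ stuck s →
      ∀ (M : Model) (c c' d d' : Config) (ℓ ℓ' : Leak),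
        pathSat M s → conc true M c s → conc false M c' s →
        step c = some (d, ℓ) → step c' = some (d', ℓ') → ℓ = ℓ')
    -- (Full symbolism) Every pair of low-equivalent initial concrete
    -- configurations concretizes the two sides of `s₀` under some model.
    (hFull : ∀ c₀ c₀', lowEq c₀ c₀' →
      ∃ M : Model, pathSat M s₀ ∧ conc true M c₀ s₀ ∧ conc false M c₀' s₀) :
    -- Conclusion: if some low-equivalent pair produces differing `k`-step
    -- leakage traces, symbolic execution gets stuck within `k` steps;
    -- equivalently, if symbolic execution completes `k` steps without any
    -- leakage predicate failing, the program is ONI up to `k`.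
    ((∃ (c₀ c₀' cₖ cₖ' : Config) (t t' : List Leak),
        lowEq c₀ c₀' ∧ Run step c₀ k cₖ t ∧ Run step c₀' k cₖ' t' ∧ t ≠ t') →
      GetsStuck sstep stuck s₀ k) ∧
    (¬ GetsStuck sstep stuck s₀ k →
      ∀ (c₀ c₀' cₖ cₖ' : Config) (t t' : List Leak), lowEq c₀ c₀' →
        Run step c₀ k cₖ t → Run step c₀' k cₖ' t' → t = t') := by
  have oni : ¬ GetsStuck sstep stuck s₀ k → ∀ (c₀ c₀' cₖ cₖ' : Config) (t t' : List Leak),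
      lowEq c₀ c₀' → Run step c₀ k cₖ t → Run step c₀' k cₖ' t' → t = t' := by
    intro hns c₀ c₀' cₖ cₖ' t t' hlow h h'
    obtain ⟨M, hM, hc, hc'⟩ := hFull c₀ c₀' hlow
    refine Run.trace_eq_of_forall_lt
      (R := fun c c' => ∃ s M, ¬ stuck s ∧ pathSat M s ∧ conc true M c s ∧ conc false M c' s)
      (fun c c' d d' ℓ ℓ' ⟨s, M, hs, hM, hc, hc'⟩ => hSound s hs M c c' d d' ℓ ℓ' hM hc hc')
      (fun n hn c c' t hrun hrun' => ?_) le_rfl h h'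
    obtain ⟨s, M', -, hs⟩ := hComplete hns n hn.le M c₀ c₀' c c' t t hM hc hc' hrun hrun' rfl
    exact ⟨s, M', hs⟩
  refine ⟨fun ⟨c₀, c₀', cₖ, cₖ', t, t', hlow, h, h', hne⟩ => ?_, oni⟩
  by_contra hns
  exact hne (oni hns c₀ c₀' cₖ cₖ' t t' hlow h h')
end
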